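/- arXiv:math/0501279 — 2 statements merged into one kernel-verified Lean document; each statement's English description precedes it below -/
import Mathlib

section
/- Let n, v, φ : ℝ × ℝ → ℝ be smooth functions, 1-periodic in the space variable x, satisfying for all (t,x): ∂ₜn + ∂ₓ(n·v) = 0, ∂ₜv + v·∂ₓv + ∂ₓφ = 0, and φ − ∂ₓ²φ = n. Then the functional H₁(t) = ∫₀¹ ½( v(t,x)²·n(t,x) + (∂ₓφ(t,x))² + φ(t,x)² ) dx is constant in t. -/
open MeasureTheory Metric intervalIntegral

/-- time partial derivative -/
noncomputable def pT (f : ℝ × ℝ → ℝ) (p : ℝ × ℝ) : ℝ := fderiv ℝ f p (1, 0)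
/-- space partial derivative -/
noncomputable def pX (f : ℝ × ℝ → ℝ) (p : ℝ × ℝ) : ℝ := fderiv ℝ f p (0, 1)

lemma hasDerivAt_T {f : ℝ × ℝ → ℝ} (hf : Differentiable ℝ f) (t x : ℝ) :
    HasDerivAt (fun τ => f (τ, x)) (pT f (t, x)) t := by
  have h1 : HasDerivAt (fun τ : ℝ => ((τ, x) : ℝ × ℝ)) (1, 0) t :=
    (hasDerivAt_id t).prodMk (hasDerivAt_const t x)
  simpa [Function.comp_def, pT] using (hf (t, x)).hasFDerivAt.comp_hasDerivAt t h1

lemma hasDerivAt_X {f : ℝ × ℝ → ℝ} (hf : Differentiable ℝ f) (t x : ℝ) :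
    HasDerivAt (fun y => f (t, y)) (pX f (t, x)) x := by
  have h1 : HasDerivAt (fun y : ℝ => ((t, y) : ℝ × ℝ)) (0, 1) x :=
    (hasDerivAt_const x t).prodMk (hasDerivAt_id x)
  simpa [Function.comp_def, pX] using (hf (t, x)).hasFDerivAt.comp_hasDerivAt x h1

lemma contDiff_pT {f : ℝ × ℝ → ℝ} (hf : ContDiff ℝ (⊤ : ℕ∞) f) : ContDiff ℝ (⊤ : ℕ∞) (pT f) := by
  have h := hf.fderiv_right (m := (⊤ : ℕ∞)) (by simp)
  exact h.clm_apply contDiff_const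

lemma contDiff_pX {f : ℝ × ℝ → ℝ} (hf : ContDiff ℝ (⊤ : ℕ∞) f) : ContDiff ℝ (⊤ : ℕ∞) (pX f) := by
  have h := hf.fderiv_right (m := (⊤ : ℕ∞)) (by simp)
  exact h.clm_apply contDiff_const

lemma clairaut {f : ℝ × ℝ → ℝ} (hf : ContDiff ℝ (⊤ : ℕ∞) f) (p : ℝ × ℝ) :
    pT (pX f) p = pX (pT f) p := by
  have hd : Differentiable ℝ (fderiv ℝ f) :=
    (hf.fderiv_right (m := (⊤ : ℕ∞)) (by simp)).differentiable (by simp)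
  have h2 : HasFDerivAt (fderiv ℝ f) (fderiv ℝ (fderiv ℝ f) p) p := (hd p).hasFDerivAt
  have hsymm : IsSymmSndFDerivAt ℝ f p := hf.contDiffAt.isSymmSndFDerivAt (by simp [minSmoothness_of_isRCLikeNormedField]; exact WithTop.coe_le_coe.mpr (le_top : ((2:ℕ) : ℕ∞) ≤ ⊤))
  have e1 : pT (pX f) p = (fderiv ℝ (fderiv ℝ f) p ((1:ℝ), (0:ℝ))) ((0:ℝ), (1:ℝ)) := by
    have h3 : HasFDerivAt (pX f)
        (((ContinuousLinearMap.apply ℝ ℝ (((0:ℝ), (1:ℝ)))).comp (fderiv ℝ (fderiv ℝ f) p))) p :=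
      (ContinuousLinearMap.apply ℝ ℝ (((0:ℝ), (1:ℝ)))).hasFDerivAt.comp p h2
    rw [pT, h3.fderiv]; rfl
  have e2 : pX (pT f) p = (fderiv ℝ (fderiv ℝ f) p ((0:ℝ), (1:ℝ))) ((1:ℝ), (0:ℝ)) := by
    have h3 : HasFDerivAt (pT f)
        (((ContinuousLinearMap.apply ℝ ℝ (((1:ℝ), (0:ℝ)))).comp (fderiv ℝ (fderiv ℝ f) p))) p :=
      (ContinuousLinearMap.apply ℝ ℝ (((1:ℝ), (0:ℝ)))).hasFDerivAt.comp p h2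
    rw [pX, h3.fderiv]; rfl
  rw [e1, e2]; exact hsymm _ _

lemma per_pX {f : ℝ × ℝ → ℝ} (hf : Differentiable ℝ f)
    (hp : ∀ t x, f (t, x + 1) = f (t, x)) (t x : ℝ) :
    pX f (t, x + 1) = pX f (t, x) := by
  have h1 : HasDerivAt (fun y : ℝ => f (t, y + 1)) (pX f (t, x + 1) * 1) x :=
    HasDerivAt.comp (h₂ := fun y => f (t, y)) x (hasDerivAt_X hf t (x + 1)) ((hasDerivAt_id x).add_const 1)
  have h2 : HasDerivAt (fun y : ℝ => f (t, y)) (pX f (t, x + 1) * 1) x := by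
    have : (fun y : ℝ => f (t, y + 1)) = fun y : ℝ => f (t, y) := funext fun y => hp t y
    rwa [this] at h1
  have := h2.unique (hasDerivAt_X hf t x)
  linarith

lemma per_pT {f : ℝ × ℝ → ℝ} (hf : Differentiable ℝ f)
    (hp : ∀ t x, f (t, x + 1) = f (t, x)) (t x : ℝ) :
    pT f (t, x + 1) = pT f (t, x) := by
  rw [← (hasDerivAt_T hf t (x + 1)).deriv, ← (hasDerivAt_T hf t x).deriv]
  congr 1
  exact funext fun τ => hp τ x

/-- Conservation of `H₁ = ∫ ½(v²n + (∂ₓφ)² + φ²) dx` for the (local form of the)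
modified Euler–Poisson equation in one space dimension, where `φ − ∂ₓ²φ = n`. -/
theorem mEP_H1_conserved (n v φ : ℝ × ℝ → ℝ)
    (hn : ContDiff ℝ (⊤ : ℕ∞) n) (hv : ContDiff ℝ (⊤ : ℕ∞) v) (hφ : ContDiff ℝ (⊤ : ℕ∞) φ)
    (hnp : ∀ t x, n (t, x + 1) = n (t, x))
    (hvp : ∀ t x, v (t, x + 1) = v (t, x))
    (hφp : ∀ t x, φ (t, x + 1) = φ (t, x))
    (heq1 : ∀ t x, deriv (fun τ => n (τ, x)) t
      + deriv (fun y => n (t, y) * v (t, y)) x = 0)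
    (heq2 : ∀ t x, deriv (fun τ => v (τ, x)) t
      + v (t, x) * deriv (fun y => v (t, y)) x
      + deriv (fun y => φ (t, y)) x = 0)
    (heq3 : ∀ t x, φ (t, x) - deriv (fun y => deriv (fun z => φ (t, z)) y) x = n (t, x)) :
    ∀ t₁ t₂ : ℝ,
      (∫ x in (0:ℝ)..1, (1/2 : ℝ) * ((v (t₁, x)) ^ 2 * n (t₁, x)
          + (deriv (fun y => φ (t₁, y)) x) ^ 2 + (φ (t₁, x)) ^ 2)) =
        ∫ x in (0:ℝ)..1, (1/2 : ℝ) * ((v (t₂, x)) ^ 2 * n (t₂, x)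
          + (deriv (fun y => φ (t₂, y)) x) ^ 2 + (φ (t₂, x)) ^ 2) := by
  intro t₁ t₂
  -- differentiability facts
  have hnd : Differentiable ℝ n := hn.differentiable (by simp)
  have hvd : Differentiable ℝ v := hv.differentiable (by simp)
  have hφd : Differentiable ℝ φ := hφ.differentiable (by simp)
  have hφx : ContDiff ℝ (⊤ : ℕ∞) (pX φ) := contDiff_pX hφ
  have hφxd : Differentiable ℝ (pX φ) := hφx.differentiable (by simp)
  have hφxx : ContDiff ℝ (⊤ : ℕ∞) (pX (pX φ)) := contDiff_pX hφx
  have hφxxd : Differentiable ℝ (pX (pX φ)) := hφxx.differentiable (by simp)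
  have hφxt : ContDiff ℝ (⊤ : ℕ∞) (pT (pX φ)) := contDiff_pT hφx
  have hφxtd : Differentiable ℝ (pT (pX φ)) := hφxt.differentiable (by simp)
  -- the integrand and its time derivative
  set E : ℝ × ℝ → ℝ :=
    fun p => (1/2 : ℝ) * (v p ^ 2 * n p + pX φ p ^ 2 + φ p ^ 2) with hE
  set E' : ℝ × ℝ → ℝ := fun p => (1/2 : ℝ) * ((2 * v p * pT v p * n p
      + v p ^ 2 * pT n p + 2 * pX φ p * pT (pX φ) p) + 2 * φ p * pT φ p) with hE'
  have hEc : Continuous E := by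
    apply Continuous.mul continuous_const
    exact (((hv.continuous.pow 2).mul hn.continuous).add (hφx.continuous.pow 2)).add
      (hφ.continuous.pow 2)
  have hE'c : Continuous E' := by
    refine continuous_const.mul ?_
    exact (((((continuous_const.mul hv.continuous).mul (contDiff_pT hv).continuous).mul
        hn.continuous).add ((hv.continuous.pow 2).mul (contDiff_pT hn).continuous)).add
        ((continuous_const.mul hφx.continuous).mul hφxt.continuous)).add
      ((continuous_const.mul hφ.continuous).mul (contDiff_pT hφ).continuous)
  -- `E'` is the time derivative of the integrand
  have hEdiff : ∀ t x : ℝ, HasDerivAt (fun τ => E (τ, x)) (E' (t, x)) t := by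
    intro t x
    have h1 := hasDerivAt_T hvd t x
    have h2 := hasDerivAt_T hnd t x
    have h3 := hasDerivAt_T hφxd t x
    have h4 := hasDerivAt_T hφd t x
    have H := ((((h1.fun_pow 2).fun_mul h2).fun_add (h3.fun_pow 2)).fun_add (h4.fun_pow 2)).const_mul (1/2 : ℝ)
    refine H.congr_deriv ?_
    simp only [hE']
    push_cast
    ring
  -- differentiation under the integral sign
  have hHder : ∀ t₀ : ℝ, HasDerivAt (fun t => ∫ x in (0:ℝ)..1, E (t, x))
      (∫ x in (0:ℝ)..1, E' (t₀, x)) t₀ := by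
    intro t₀
    obtain ⟨C, hC⟩ := ((isCompact_Icc (a := t₀ - 1) (b := t₀ + 1)).prod
      (isCompact_Icc (a := (0:ℝ)) (b := 1))).exists_bound_of_continuousOn hE'c.continuousOn
    have key := intervalIntegral.hasDerivAt_integral_of_dominated_loc_of_deriv_le
      (𝕜 := ℝ) (μ := volume) (F := fun t x => E (t, x)) (F' := fun t x => E' (t, x))
      (x₀ := t₀) (a := 0) (b := 1) (s := Metric.ball t₀ 1) (bound := fun _ => |C|) (Metric.ball_mem_nhds t₀ one_pos)
      (Filter.Eventually.of_forall fun t =>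
        (hEc.comp (Continuous.prodMk_right t)).aestronglyMeasurable)
      ((hEc.comp (Continuous.prodMk_right t₀)).intervalIntegrable 0 1)
      (hE'c.comp (Continuous.prodMk_right t₀)).aestronglyMeasurable
      ?_ intervalIntegrable_const
      (Filter.Eventually.of_forall fun x _ t _ => hEdiff t x)
    · exact key.2
    · refine Filter.Eventually.of_forall fun x hx t ht => ?_
      have hx' : x ∈ Set.Icc (0:ℝ) 1 := by
        rw [Set.uIoc_of_le (by norm_num : (0:ℝ) ≤ 1)] at hx
        exact ⟨le_of_lt hx.1, hx.2⟩
      have ht' : t ∈ Set.Icc (t₀ - 1) (t₀ + 1) := by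
        rw [Real.ball_eq_Ioo] at ht
        exact ⟨le_of_lt ht.1, le_of_lt ht.2⟩
      calc ‖E' (t, x)‖ ≤ C := hC (t, x) (Set.mk_mem_prod ht' hx')
        _ ≤ |C| := le_abs_self C
  -- pointwise equations in terms of partial derivatives
  have ea : ∀ t x : ℝ, pT n (t, x) = -(pX n (t, x) * v (t, x) + n (t, x) * pX v (t, x)) := by
    intro t x
    have h1 := (hasDerivAt_T hnd t x).deriv
    have h2 := ((hasDerivAt_X hnd t x).fun_mul (hasDerivAt_X hvd t x)).deriv
    have := heq1 t x
    rw [h1, h2] at this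
    linarith
  have eb : ∀ t x : ℝ, pT v (t, x) = -(v (t, x) * pX v (t, x)) - pX φ (t, x) := by
    intro t x
    have h1 := (hasDerivAt_T hvd t x).deriv
    have h2 := (hasDerivAt_X hvd t x).deriv
    have h3 := (hasDerivAt_X hφd t x).deriv
    have := heq2 t x
    rw [h1, h2, h3] at this
    linarith
  have hn3 : ∀ t x : ℝ, n (t, x) = φ (t, x) - pX (pX φ) (t, x) := by
    intro t x
    have h0 : (fun y => deriv (fun z => φ (t, z)) y) = fun y => pX φ (t, y) :=
      funext fun y => (hasDerivAt_X hφd t y).deriv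
    have := heq3 t x
    rw [h0, (hasDerivAt_X hφxd t x).deriv] at this
    linarith
  have ed : ∀ t x : ℝ, pT φ (t, x) = pT n (t, x) + pX (pT (pX φ)) (t, x) := by
    intro t x
    have hfun : (fun τ => n (τ, x)) = fun τ => φ (τ, x) - pX (pX φ) (τ, x) :=
      funext fun τ => hn3 τ x
    have hsub := (hasDerivAt_T hφd t x).sub (hasDerivAt_T hφxxd t x)
    have h1 := hasDerivAt_T hnd t x
    rw [hfun] at h1
    have h2 := h1.unique hsub
    have h3 := clairaut hφx (t, x)
    rw [h2, h3]
    ring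
  -- W and its space derivative
  set W : ℝ × ℝ → ℝ := fun p => φ p * pT (pX φ) p - (1/2 : ℝ) * (n p * v p ^ 3)
      - φ p * (n p * v p) with hW
  set W' : ℝ × ℝ → ℝ := fun p =>
      (pX φ p * pT (pX φ) p + φ p * pX (pT (pX φ)) p)
      - (1/2 : ℝ) * (pX n p * v p ^ 3 + n p * (3 * v p ^ 2 * pX v p))
      - (pX φ p * (n p * v p) + φ p * (pX n p * v p + n p * pX v p)) with hW'
  have hW'c : Continuous W' := by
    refine Continuous.sub (Continuous.sub ?_ ?_) ?_
    · exact (hφx.continuous.mul hφxt.continuous).add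
        (hφ.continuous.mul (contDiff_pX hφxt).continuous)
    · exact continuous_const.mul (((contDiff_pX hn).continuous.mul
        (hv.continuous.pow 3)).add (hn.continuous.mul ((continuous_const.mul
        (hv.continuous.pow 2)).mul (contDiff_pX hv).continuous)))
    · exact (hφx.continuous.mul (hn.continuous.mul hv.continuous)).add
        (hφ.continuous.mul (((contDiff_pX hn).continuous.mul hv.continuous).add
        (hn.continuous.mul (contDiff_pX hv).continuous)))
  have hWder : ∀ t x : ℝ, HasDerivAt (fun y => W (t, y)) (W' (t, x)) x := by
    intro t x
    have h1 := hasDerivAt_X hφd t x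
    have h2 := hasDerivAt_X hφxtd t x
    have h3 := hasDerivAt_X hnd t x
    have h4 := hasDerivAt_X hvd t x
    have H := ((h1.fun_mul h2).fun_sub ((h3.fun_mul (h4.fun_pow 3)).const_mul (1/2 : ℝ))).fun_sub
      (h1.fun_mul (h3.fun_mul h4))
    refine H.congr_deriv ?_
    simp only [hW']
    push_cast
    ring
  -- pointwise identity `E' = W'`
  have hpoint : ∀ t x : ℝ, E' (t, x) = W' (t, x) := by
    intro t x
    simp only [hE', hW']
    rw [eb t x, ed t x, ea t x]
    ring
  -- periodicity of `W`
  have hWper : ∀ t : ℝ, W (t, 1) = W (t, 0) := by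
    intro t
    have h1 : (1 : ℝ) = 0 + 1 := by norm_num
    have hper : pT (pX φ) (t, (0:ℝ) + 1) = pT (pX φ) (t, 0) :=
      per_pT hφxd (per_pX hφd hφp) t 0
    rw [h1]
    simp only [hW]
    rw [hnp, hvp, hφp, hper]
  -- the derivative of the energy vanishes
  have hkey : ∀ t : ℝ, (∫ x in (0:ℝ)..1, E' (t, x)) = 0 := by
    intro t
    have h1 : (∫ x in (0:ℝ)..1, E' (t, x)) = ∫ x in (0:ℝ)..1, W' (t, x) :=
      intervalIntegral.integral_congr fun x _ => hpoint t x
    have h2 : (∫ x in (0:ℝ)..1, W' (t, x)) = W (t, 1) - W (t, 0) :=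
      intervalIntegral.integral_eq_sub_of_hasDerivAt (fun x _ => hWder t x)
        ((hW'c.comp (Continuous.prodMk_right t)).intervalIntegrable 0 1)
    rw [h1, h2, hWper t, sub_self]
  -- conclude
  have hH0 : ∀ t : ℝ, HasDerivAt (fun t => ∫ x in (0:ℝ)..1, E (t, x)) 0 t := by
    intro t
    have := hHder t
    rwa [hkey t] at this
  have hconst := is_const_of_deriv_eq_zero (𝕜 := ℝ)
    (fun t => (hH0 t).differentiableAt) (fun t => (hH0 t).deriv) t₁ t₂
  have hrw : ∀ t : ℝ, (∫ x in (0:ℝ)..1, (1/2 : ℝ) * ((v (t, x)) ^ 2 * n (t, x)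
      + (deriv (fun y => φ (t, y)) x) ^ 2 + (φ (t, x)) ^ 2))
      = ∫ x in (0:ℝ)..1, E (t, x) := by
    intro t
    refine intervalIntegral.integral_congr fun x _ => ?_
    rw [(hasDerivAt_X hφd t x).deriv]
  rw [hrw t₁, hrw t₂]
  exact hconst
end

section
/- Fix an integer σ ≥ 2 and for a smooth 1-periodic u : ℝ → ℝ define ‖u‖_{H^σ} = ( Σ_{j=0}^{σ} ∫₀¹ (u^{(j)}(x))² dx )^{1/2} and, for s > 0, |||u|||_s = sup_{k∈ℕ} ‖u^{(k)}‖_{H^σ} · s^k · (k+1)²/k!, the supremum taken in [0,∞]. There is a constant c > 0 such that for all real 0 < s' < s < 1 and all smooth 1-periodic u, v, one has |||(u·v)'|||_{s'} ≤ (c/(s − s')) · |||u|||_s · |||v|||_s. -/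
open scoped ENNReal

/-- The `H^σ` norm of a smooth 1-periodic function, computed over one period. -/
noncomputable def sobolevNorm (σ : ℕ) (u : ℝ → ℝ) : ℝ :=
  Real.sqrt (∑ j ∈ Finset.range (σ + 1), ∫ x in (0:ℝ)..1, (iteratedDeriv j u x) ^ 2)

/-- The norm `|||u|||_s = sup_k ‖u^{(k)}‖_{H^σ} s^k (k+1)²/k!` of the analytic-type
scale of Banach spaces `E_s`, the supremum taken in `[0,∞]`. -/
noncomputable def esNorm (σ : ℕ) (s : ℝ) (u : ℝ → ℝ) : ℝ≥0∞ :=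
  ⨆ k : ℕ, ENNReal.ofReal
    (sobolevNorm σ (iteratedDeriv k u) * s ^ k * ((k : ℝ) + 1) ^ 2 / (Nat.factorial k : ℝ))

set_option maxHeartbeats 1000000

namespace EsAuxPf
open Finset intervalIntegral
local notation "∞'" => (((⊤:ℕ∞)) : WithTop ℕ∞)

noncomputable def I2 (f : ℝ → ℝ) : ℝ := ∫ x in (0:ℝ)..1, (f x)^2
noncomputable def L2 (f : ℝ → ℝ) : ℝ := Real.sqrt (I2 f)

lemma I2_nonneg (f : ℝ → ℝ) : 0 ≤ I2 f :=
  intervalIntegral.integral_nonneg zero_le_one (fun x _ => sq_nonneg _)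

lemma L2_nonneg (f : ℝ → ℝ) : 0 ≤ L2 f := Real.sqrt_nonneg _

lemma L2_sq (f : ℝ → ℝ) : L2 f ^ 2 = I2 f := Real.sq_sqrt (I2_nonneg f)

lemma integral_mul_le_L2 {a b : ℝ → ℝ} (ha : Continuous a) (hb : Continuous b) :
    ∫ x in (0:ℝ)..1, a x * b x ≤ L2 a * L2 b := by
  set A := I2 a with hA
  set B := ∫ x in (0:ℝ)..1, a x * b x with hB
  set C := I2 b with hC
  have key : discrim A (2 * B) C ≤ 0 := by
    apply discrim_le_zero
    intro t
    have h0 : (0:ℝ) ≤ ∫ x in (0:ℝ)..1, (t * a x + b x)^2 :=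
      intervalIntegral.integral_nonneg zero_le_one (fun x _ => sq_nonneg _)
    have hexp : (∫ x in (0:ℝ)..1, (t * a x + b x)^2)
        = A * (t * t) + 2 * B * t + C := by
      have : ∀ x, (t * a x + b x)^2
          = (t * t) * (a x)^2 + (2 * t) * (a x * b x) + (b x)^2 := by intro x; ring
      simp only [this]
      rw [intervalIntegral.integral_add, intervalIntegral.integral_add,
        intervalIntegral.integral_const_mul, intervalIntegral.integral_const_mul]
      · simp only [hA, hC, I2]; ring
      · exact (continuous_const.mul (ha.pow 2)).intervalIntegrable _ _
      · exact (continuous_const.mul (ha.mul hb)).intervalIntegrable _ _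
      · exact ((continuous_const.mul (ha.pow 2)).add (continuous_const.mul (ha.mul hb))).intervalIntegrable _ _
      · exact (hb.pow 2).intervalIntegrable _ _
    linarith [hexp ▸ h0]
  have hBsq : B^2 ≤ A * C := by
    unfold discrim at key; nlinarith
  calc B ≤ |B| := le_abs_self _
  _ = Real.sqrt (B^2) := (Real.sqrt_sq_eq_abs B).symm
  _ ≤ Real.sqrt (A * C) := Real.sqrt_le_sqrt hBsq
  _ = Real.sqrt A * Real.sqrt C := Real.sqrt_mul (I2_nonneg a) _
  _ = L2 a * L2 b := rfl

lemma L2_add_le {a b : ℝ → ℝ} (ha : Continuous a) (hb : Continuous b) :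
    L2 (fun x => a x + b x) ≤ L2 a + L2 b := by
  have h1 : I2 (fun x => a x + b x) ≤ (L2 a + L2 b)^2 := by
    have hexp : I2 (fun x => a x + b x) = I2 a + 2 * (∫ x in (0:ℝ)..1, a x * b x) + I2 b := by
      simp only [I2]
      have : ∀ x, (a x + b x)^2 = (a x)^2 + 2 * (a x * b x) + (b x)^2 := fun x => by ring
      simp only [this]
      rw [intervalIntegral.integral_add, intervalIntegral.integral_add,
        intervalIntegral.integral_const_mul]
      · exact (ha.pow 2).intervalIntegrable _ _
      · exact (continuous_const.mul (ha.mul hb)).intervalIntegrable _ _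
      · exact ((ha.pow 2).add (continuous_const.mul (ha.mul hb))).intervalIntegrable _ _
      · exact (hb.pow 2).intervalIntegrable _ _
    have hcs := integral_mul_le_L2 ha hb
    have := L2_sq a; have := L2_sq b
    nlinarith
  calc L2 (fun x => a x + b x) ≤ Real.sqrt ((L2 a + L2 b)^2) := Real.sqrt_le_sqrt h1
  _ = |L2 a + L2 b| := Real.sqrt_sq_eq_abs _
  _ = L2 a + L2 b := abs_of_nonneg (add_nonneg (L2_nonneg a) (L2_nonneg b))

lemma L2_sum_le (M : ℕ) (f : ℕ → ℝ → ℝ) (hf : ∀ j, Continuous (f j)) :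
    L2 (fun x => ∑ j ∈ range M, f j x) ≤ ∑ j ∈ range M, L2 (f j) := by
  induction M with
  | zero => simp only [range_zero, sum_empty]; simp [L2, I2]
  | succ n ih =>
      have hcont : Continuous (fun x => ∑ j ∈ range n, f j x) := by
        exact continuous_finset_sum _ (fun j _ => hf j)
      calc L2 (fun x => ∑ j ∈ range (n+1), f j x)
          = L2 (fun x => (∑ j ∈ range n, f j x) + f n x) := by
            simp only [Finset.sum_range_succ]
        _ ≤ L2 (fun x => ∑ j ∈ range n, f j x) + L2 (f n) := L2_add_le hcont (hf n)
        _ ≤ ∑ j ∈ range n, L2 (f j) + L2 (f n) := by linarith [ih]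
        _ = ∑ j ∈ range (n+1), L2 (f j) := (Finset.sum_range_succ _ _).symm

lemma L2_const_mul (c : ℝ) (f : ℝ → ℝ) : L2 (fun x => c * f x) = |c| * L2 f := by
  have : I2 (fun x => c * f x) = c^2 * I2 f := by
    simp only [I2, mul_pow]
    rw [intervalIntegral.integral_const_mul]
  rw [L2, this, Real.sqrt_mul (sq_nonneg c), Real.sqrt_sq_eq_abs, L2]


lemma I2_const_mul (c : ℝ) (f : ℝ → ℝ) : I2 (fun x => c * f x) = c^2 * I2 f := by
  simp only [I2, mul_pow]
  rw [intervalIntegral.integral_const_mul]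
lemma smooth_iter {f : ℝ → ℝ} (hf : ContDiff ℝ ((⊤:ℕ∞) : WithTop ℕ∞) f) (n : ℕ) :
    ContDiff ℝ ((⊤:ℕ∞) : WithTop ℕ∞) (iteratedDeriv n f) := by
  rw [iteratedDeriv_eq_iterate]; exact ContDiff.iterate_deriv n hf

lemma smooth_deriv {f : ℝ → ℝ} (hf : ContDiff ℝ ((⊤:ℕ∞) : WithTop ℕ∞) f) : ContDiff ℝ ((⊤:ℕ∞) : WithTop ℕ∞) (deriv f) :=
  (contDiff_infty_iff_deriv.mp hf).2

lemma sq_le_of_mem {h : ℝ → ℝ} (hh : ContDiff ℝ ((⊤:ℕ∞) : WithTop ℕ∞) h) {x : ℝ}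
    (hx : x ∈ Set.Icc (0:ℝ) 1) : h x ^ 2 ≤ 2 * I2 h + I2 (deriv h) := by
  have hc : Continuous h := hh.continuous
  have hdiff : Differentiable ℝ h := (contDiff_infty_iff_deriv.mp hh).1
  have hc' : Continuous (deriv h) := (smooth_deriv hh).continuous
  set G : ℝ → ℝ := fun t => 2 * h t * deriv h t with hG
  have hGc : Continuous G := (continuous_const.mul hc).mul hc'
  have hd : ∀ t : ℝ, HasDerivAt (fun y => h y ^ 2) (G t) t := by
    intro t
    have h1 : HasDerivAt h (deriv h t) t := (hdiff t).hasDerivAt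
    have : HasDerivAt (fun y => h y ^ 2) _ t := h1.pow 2
    simpa [hG, mul_comm, mul_assoc, mul_left_comm] using this
  have hGbound : ∀ t : ℝ, |G t| ≤ h t ^ 2 + deriv h t ^ 2 := by
    intro t
    have : |G t| = 2 * (|h t| * |deriv h t|) := by
      rw [hG]; rw [abs_mul, abs_mul]; simp [abs_of_nonneg, mul_assoc]
    rw [this]
    calc 2 * (|h t| * |deriv h t|) ≤ |h t|^2 + |deriv h t|^2 := by
          nlinarith [sq_nonneg (|h t| - |deriv h t|)]
      _ = h t ^2 + deriv h t ^2 := by rw [sq_abs, sq_abs]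
  set J : ℝ := ∫ t in (0:ℝ)..1, |G t| with hJ
  have hJle : J ≤ I2 h + I2 (deriv h) := by
    rw [hJ, I2, I2, ← intervalIntegral.integral_add (f := fun x => h x ^ 2) (g := fun x => deriv h x ^ 2)
      ((hc.pow 2).intervalIntegrable _ _) ((hc'.pow 2).intervalIntegrable _ _)]
    exact intervalIntegral.integral_mono_on zero_le_one
      (hGc.abs.intervalIntegrable _ _)
      (((hc.pow 2).add (hc'.pow 2)).intervalIntegrable _ _)
      (fun t _ => hGbound t)
  have hstep : ∀ y ∈ Set.Icc (0:ℝ) 1, h x ^ 2 - h y ^ 2 ≤ J := by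
    intro y hy
    have hftc : ∫ t in y..x, G t = h x ^ 2 - h y ^ 2 :=
      intervalIntegral.integral_eq_sub_of_hasDerivAt (fun t _ => hd t)
        (hGc.intervalIntegrable _ _)
    have h1 : |∫ t in y..x, G t| ≤ |(∫ t in y..x, |G t|)|  := by
      simpa [Real.norm_eq_abs] using
        intervalIntegral.norm_integral_le_abs_integral_norm (f := G) (a := y) (b := x)
    have hsub : Set.uIoc y x ⊆ Set.uIoc (0:ℝ) 1 := by
      rw [Set.uIoc, Set.uIoc]
      apply Set.Ioc_subset_Ioc
      · have h01 : (0:ℝ) ⊓ 1 = 0 := by norm_num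
        rw [h01]; exact le_inf hy.1 hx.1
      · have h01 : (0:ℝ) ⊔ 1 = 1 := by norm_num
        rw [h01]; exact sup_le hy.2 hx.2
    have h2 : |(∫ t in y..x, |G t|)| ≤ |(∫ t in (0:ℝ)..1, |G t|)| := by
      apply intervalIntegral.abs_integral_mono_interval hsub
      · filter_upwards with t using abs_nonneg _
      · exact hGc.abs.intervalIntegrable _ _
    have h3 : |(∫ t in (0:ℝ)..1, |G t|)| = J := by
      rw [hJ, abs_of_nonneg]
      exact intervalIntegral.integral_nonneg zero_le_one (fun t _ => abs_nonneg _)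
    calc h x ^2 - h y ^2 = ∫ t in y..x, G t := hftc.symm
      _ ≤ |∫ t in y..x, G t| := le_abs_self _
      _ ≤ J := by linarith
  have havg : h x ^ 2 = I2 h + ∫ y in (0:ℝ)..1, (h x ^2 - h y ^2) := by
    have h0 : h x ^ 2 = ∫ _y in (0:ℝ)..1, h x ^ 2 := by simp
    calc h x ^2 = ∫ _y in (0:ℝ)..1, h x ^2 := h0
      _ = ∫ y in (0:ℝ)..1, (h y ^2 + (h x ^2 - h y ^2)) := by
          congr 1; funext y; ring
      _ = I2 h + ∫ y in (0:ℝ)..1, (h x ^2 - h y ^2) := by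
          rw [intervalIntegral.integral_add (f := fun y => h y ^ 2) (g := fun y => h x ^ 2 - h y ^ 2) ((hc.pow 2).intervalIntegrable _ _)
            ((continuous_const.sub (hc.pow 2)).intervalIntegrable _ _)]
          rfl
  have hmid : (∫ y in (0:ℝ)..1, (h x ^2 - h y ^2)) ≤ J := by
    calc (∫ y in (0:ℝ)..1, (h x ^2 - h y ^2)) ≤ ∫ _y in (0:ℝ)..1, J := by
          apply intervalIntegral.integral_mono_on zero_le_one
            ((continuous_const.sub (hc.pow 2)).intervalIntegrable _ _)
            (intervalIntegrable_const) hstep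
      _ = J := by simp
  linarith
lemma I2_mul_le' {f g : ℝ → ℝ} (hf : ContDiff ℝ ∞' f) (hg : Continuous g) :
    I2 (fun x => f x * g x) ≤ (2 * I2 f + I2 (deriv f)) * I2 g := by
  have hfc : Continuous f := hf.continuous
  have hbound : ∀ x ∈ Set.Icc (0:ℝ) 1,
      (f x * g x)^2 ≤ (2 * I2 f + I2 (deriv f)) * (g x)^2 := by
    intro x hx
    have h1 := sq_le_of_mem hf hx
    calc (f x * g x)^2 = (f x)^2 * (g x)^2 := by ring
      _ ≤ (2 * I2 f + I2 (deriv f)) * (g x)^2 :=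
        mul_le_mul_of_nonneg_right h1 (sq_nonneg _)
  calc I2 (fun x => f x * g x)
      ≤ ∫ x in (0:ℝ)..1, (2 * I2 f + I2 (deriv f)) * (g x)^2 := by
        rw [I2]
        exact intervalIntegral.integral_mono_on zero_le_one
          (((hfc.mul hg).pow 2).intervalIntegrable _ _)
          ((continuous_const.mul (hg.pow 2)).intervalIntegrable _ _) hbound
    _ = (2 * I2 f + I2 (deriv f)) * I2 g := intervalIntegral.integral_const_mul _ _

lemma cd_nat {f : ℝ → ℝ} (hf : ContDiff ℝ ∞' f) (i : ℕ) : ContDiff ℝ i f :=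
  hf.of_le (by exact_mod_cast le_top)

lemma sobolev_eq (σ : ℕ) (u : ℝ → ℝ) :
    sobolevNorm σ u = Real.sqrt (∑ j ∈ range (σ+1), I2 (iteratedDeriv j u)) := rfl

lemma sobolev_nonneg (σ : ℕ) (u : ℝ → ℝ) : 0 ≤ sobolevNorm σ u := Real.sqrt_nonneg _

lemma I2_iter_le (σ : ℕ) {j : ℕ} (hj : j ≤ σ) (u : ℝ → ℝ) :
    I2 (iteratedDeriv j u) ≤ sobolevNorm σ u ^ 2 := by
  rw [sobolev_eq, Real.sq_sqrt (Finset.sum_nonneg fun i _ => I2_nonneg _)]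
  exact Finset.single_le_sum (f := fun i => I2 (iteratedDeriv i u)) (fun i _ => I2_nonneg _) (Finset.mem_range.mpr (Nat.lt_succ_of_le hj))

lemma L2_iter_le (σ : ℕ) {j : ℕ} (hj : j ≤ σ) (u : ℝ → ℝ) :
    L2 (iteratedDeriv j u) ≤ sobolevNorm σ u := by
  have : L2 (iteratedDeriv j u) ≤ Real.sqrt (sobolevNorm σ u ^ 2) :=
    Real.sqrt_le_sqrt (I2_iter_le σ hj u)
  rwa [Real.sqrt_sq (sobolev_nonneg σ u)] at this

lemma sqrt_add_le {a b : ℝ} (ha : 0 ≤ a) (hb : 0 ≤ b) :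
    Real.sqrt (a + b) ≤ Real.sqrt a + Real.sqrt b := by
  have h1 : a + b ≤ (Real.sqrt a + Real.sqrt b)^2 := by
    nlinarith [Real.sq_sqrt ha, Real.sq_sqrt hb,
      mul_nonneg (Real.sqrt_nonneg a) (Real.sqrt_nonneg b)]
  calc Real.sqrt (a+b) ≤ Real.sqrt ((Real.sqrt a + Real.sqrt b)^2) := Real.sqrt_le_sqrt h1
    _ = Real.sqrt a + Real.sqrt b :=
        Real.sqrt_sq (add_nonneg (Real.sqrt_nonneg a) (Real.sqrt_nonneg b))

lemma sqrt_sum_le (n : ℕ) (a : ℕ → ℝ) (ha : ∀ j, 0 ≤ a j) :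
    Real.sqrt (∑ j ∈ range n, a j) ≤ ∑ j ∈ range n, Real.sqrt (a j) := by
  induction n with
  | zero => simp
  | succ n ih =>
      rw [Finset.sum_range_succ, Finset.sum_range_succ]
      calc Real.sqrt ((∑ j ∈ range n, a j) + a n)
          ≤ Real.sqrt (∑ j ∈ range n, a j) + Real.sqrt (a n) :=
            sqrt_add_le (Finset.sum_nonneg fun i _ => ha i) (ha n)
        _ ≤ (∑ j ∈ range n, Real.sqrt (a j)) + Real.sqrt (a n) := by linarith

lemma sobolev_le_sum (σ : ℕ) (u : ℝ → ℝ) :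
    sobolevNorm σ u ≤ ∑ j ∈ range (σ+1), L2 (iteratedDeriv j u) := by
  rw [sobolev_eq]
  exact sqrt_sum_le _ _ (fun j => I2_nonneg _)

lemma L2_iter_mul (σ : ℕ) {f g : ℝ → ℝ} (hf : ContDiff ℝ ∞' f) (hg : ContDiff ℝ ∞' g)
    {i i' : ℕ} (hi : i + 1 ≤ σ) (hi' : i' ≤ σ) :
    L2 (fun x => iteratedDeriv i f x * iteratedDeriv i' g x)
      ≤ Real.sqrt 3 * sobolevNorm σ f * sobolevNorm σ g := by
  set A := sobolevNorm σ f with hA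
  set B := sobolevNorm σ g with hB
  have hF := smooth_iter hf i
  have hGc : Continuous (iteratedDeriv i' g) := (smooth_iter hg i').continuous
  have h1 := I2_mul_le' hF hGc
  have e1 : deriv (iteratedDeriv i f) = iteratedDeriv (i+1) f := (iteratedDeriv_succ).symm
  have h2 : 2 * I2 (iteratedDeriv i f) + I2 (deriv (iteratedDeriv i f)) ≤ 3 * A^2 := by
    rw [e1]
    have k1 := I2_iter_le σ (Nat.le_of_succ_le hi) f
    have k2 := I2_iter_le σ hi f
    linarith
  have h3 : I2 (iteratedDeriv i' g) ≤ B^2 := I2_iter_le σ hi' g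
  have h4 : I2 (fun x => iteratedDeriv i f x * iteratedDeriv i' g x) ≤ 3 * A^2 * B^2 := by
    nlinarith [I2_nonneg (iteratedDeriv i' g), I2_nonneg (iteratedDeriv i f),
      I2_nonneg (deriv (iteratedDeriv i f)), sq_nonneg A]
  have h5 : L2 (fun x => iteratedDeriv i f x * iteratedDeriv i' g x)
      ≤ Real.sqrt (3 * A^2 * B^2) := Real.sqrt_le_sqrt h4
  calc L2 (fun x => iteratedDeriv i f x * iteratedDeriv i' g x)
      ≤ Real.sqrt (3 * A^2 * B^2) := h5
    _ = Real.sqrt 3 * A * B := by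
        rw [show (3:ℝ) * A^2 * B^2 = 3 * (A*B)^2 by ring,
          Real.sqrt_mul (by norm_num : (0:ℝ) ≤ 3),
          Real.sqrt_sq (mul_nonneg (sobolev_nonneg σ f) (sobolev_nonneg σ g)), mul_assoc]

lemma L2_iter_mul' (σ : ℕ) (hσ : 1 ≤ σ) {f g : ℝ → ℝ}
    (hf : ContDiff ℝ ∞' f) (hg : ContDiff ℝ ∞' g)
    {i i' : ℕ} (h : i + i' ≤ σ) :
    L2 (fun x => iteratedDeriv i f x * iteratedDeriv i' g x)
      ≤ Real.sqrt 3 * sobolevNorm σ f * sobolevNorm σ g := by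
  by_cases hc : i + 1 ≤ σ
  · exact L2_iter_mul σ hf hg hc (by omega)
  · have hi : i = σ := by omega
    have hi' : i' = 0 := by omega
    have := L2_iter_mul σ hg hf (i := i') (i' := i) (by omega) (by omega)
    have heq : (fun x => iteratedDeriv i f x * iteratedDeriv i' g x)
        = (fun x => iteratedDeriv i' g x * iteratedDeriv i f x) := by
      funext x; ring
    rw [heq]
    calc L2 (fun x => iteratedDeriv i' g x * iteratedDeriv i f x)
        ≤ Real.sqrt 3 * sobolevNorm σ g * sobolevNorm σ f := this
      _ = Real.sqrt 3 * sobolevNorm σ f * sobolevNorm σ g := by ring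


lemma diff_iter {f : ℝ → ℝ} (hf : ContDiff ℝ ∞' f) (n : ℕ) :
    Differentiable ℝ (iteratedDeriv n f) :=
  (contDiff_infty_iff_deriv.mp (smooth_iter hf n)).1

lemma binom_step (m : ℕ) (a b : ℕ → ℝ) :
    ∑ j ∈ range (m+1), (m.choose j : ℝ) * (a (j+1) * b (m-j) + a j * b (m+1-j))
      = ∑ j ∈ range (m+2), ((m+1).choose j : ℝ) * (a j * b (m+1-j)) := by
  have hR : ∑ j ∈ range (m+2), ((m+1).choose j : ℝ) * (a j * b (m+1-j))
      = (∑ j ∈ range (m+1), ((m+1).choose (j+1) : ℝ) * (a (j+1) * b (m-j)))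
        + (a 0 * b (m+1)) := by
    rw [Finset.sum_range_succ']
    simp [Nat.succ_sub_succ]
  have hsplit : ∀ j, ((m+1).choose (j+1) : ℝ) = (m.choose j : ℝ) + (m.choose (j+1) : ℝ) := by
    intro j
    rw [Nat.choose_succ_succ]
    push_cast
    ring
  have hmid : ∑ j ∈ range (m+1), ((m.choose (j+1)) : ℝ) * (a (j+1) * b (m-j))
      = (∑ j ∈ range (m+1), (m.choose j : ℝ) * (a j * b (m+1-j))) - a 0 * b (m+1) := by
    have h1 := Finset.sum_range_succ' (fun j => (m.choose j : ℝ) * (a j * b (m+1-j))) (m+1)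
    simp only [Nat.succ_sub_succ, Nat.sub_zero, Nat.choose_zero_right, Nat.cast_one,
      one_mul] at h1
    rw [Finset.sum_range_succ] at h1
    simp only [Nat.choose_succ_self, Nat.cast_zero, zero_mul, add_zero] at h1
    linarith [h1]
  rw [hR]
  have : ∀ j ∈ range (m+1), ((m+1).choose (j+1) : ℝ) * (a (j+1) * b (m-j))
      = (m.choose j : ℝ) * (a (j+1) * b (m-j)) + (m.choose (j+1) : ℝ) * (a (j+1) * b (m-j)) := by
    intro j _; rw [hsplit j]; ring
  rw [Finset.sum_congr rfl this, Finset.sum_add_distrib, hmid]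
  simp only [mul_add, Finset.sum_add_distrib]
  ring

lemma iteratedDeriv_mul_eq {u v : ℝ → ℝ} (hu : ContDiff ℝ ∞' u) (hv : ContDiff ℝ ∞' v) (m : ℕ) :
    iteratedDeriv m (fun x => u x * v x)
      = fun x => ∑ j ∈ range (m+1),
          (m.choose j : ℝ) * (iteratedDeriv j u x * iteratedDeriv (m-j) v x) := by
  induction m with
  | zero => funext x; simp
  | succ m ih =>
      funext x
      rw [iteratedDeriv_succ, ih]
      have hder : ∀ j, deriv (fun y => (m.choose j : ℝ)
          * (iteratedDeriv j u y * iteratedDeriv (m-j) v y)) x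
          = (m.choose j : ℝ) * (iteratedDeriv (j+1) u x * iteratedDeriv (m-j) v x
              + iteratedDeriv j u x * deriv (iteratedDeriv (m-j) v) x) := by
        intro j
        rw [deriv_const_mul (d := fun y => iteratedDeriv j u y * iteratedDeriv (m-j) v y) _ (((diff_iter hu j) x).mul ((diff_iter hv (m-j)) x))]
        rw [deriv_fun_mul ((diff_iter hu j) x) ((diff_iter hv (m-j)) x)]
        rw [← iteratedDeriv_succ]
      rw [deriv_fun_sum (A := fun j y => (m.choose j : ℝ) * (iteratedDeriv j u y * iteratedDeriv (m-j) v y)) (fun j _ =>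
        (differentiableAt_const _).mul (((diff_iter hu j) x).mul ((diff_iter hv (m-j)) x)))]
      have hstep : ∑ j ∈ range (m+1), deriv (fun y => (m.choose j : ℝ)
            * (iteratedDeriv j u y * iteratedDeriv (m-j) v y)) x
          = ∑ j ∈ range (m+1), (m.choose j : ℝ)
              * (iteratedDeriv (j+1) u x * iteratedDeriv (m-j) v x
                + iteratedDeriv j u x * iteratedDeriv (m+1-j) v x) := by
        apply Finset.sum_congr rfl
        intro j hj
        rw [hder j, ← iteratedDeriv_succ]
        have : m - j + 1 = m + 1 - j := by
          have := Finset.mem_range.mp hj; omega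
        rw [this]
      rw [hstep, binom_step m (fun j => iteratedDeriv j u x) (fun j => iteratedDeriv j v x)]

lemma iteratedDeriv_fun_sum {M i : ℕ} {F : ℕ → ℝ → ℝ}
    (hF : ∀ j, ContDiff ℝ ∞' (F j)) :
    iteratedDeriv i (fun x => ∑ j ∈ range M, F j x)
      = fun x => ∑ j ∈ range M, iteratedDeriv i (F j) x := by
  funext x
  rw [iteratedDeriv_eq_iteratedFDeriv,
    iteratedFDeriv_sum (fun j _ => cd_nat (hF j) i)]
  simp [ContinuousMultilinearMap.sum_apply, iteratedDeriv_eq_iteratedFDeriv]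

lemma iteratedDeriv_cmul {f : ℝ → ℝ} (hf : ContDiff ℝ ∞' f) (c : ℝ) (n : ℕ) :
    iteratedDeriv n (fun x => c * f x) = fun x => c * iteratedDeriv n f x := by
  funext x
  have h1 : (fun x => c * f x) = c • f := by funext y; simp [smul_eq_mul]
  rw [h1, iteratedDeriv_eq_iteratedFDeriv, iteratedFDeriv_const_smul_apply (cd_nat hf n).contDiffAt]
  simp [iteratedDeriv_eq_iteratedFDeriv]

lemma sobolev_const_mul (σ : ℕ) (c : ℝ) {f : ℝ → ℝ} (hf : ContDiff ℝ ∞' f) :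
    sobolevNorm σ (fun x => c * f x) = |c| * sobolevNorm σ f := by
  rw [sobolev_eq, sobolev_eq]
  have : ∀ j, I2 (iteratedDeriv j (fun x => c * f x)) = c^2 * I2 (iteratedDeriv j f) := by
    intro j
    rw [iteratedDeriv_cmul hf c j, I2_const_mul]
  simp only [this]
  rw [← Finset.mul_sum, Real.sqrt_mul (sq_nonneg c), Real.sqrt_sq_eq_abs]

noncomputable def CB (σ : ℕ) : ℝ := ((σ:ℝ)+1) * 2^σ * Real.sqrt 3

lemma CB_pos (σ : ℕ) : 0 < CB σ := by
  have h3 : (0:ℝ) < Real.sqrt 3 := Real.sqrt_pos.mpr (by norm_num)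
  apply mul_pos (mul_pos (by positivity) (by positivity)) h3

lemma sobolev_mul_le (σ : ℕ) (hσ : 1 ≤ σ) {f g : ℝ → ℝ}
    (hf : ContDiff ℝ ∞' f) (hg : ContDiff ℝ ∞' g) :
    sobolevNorm σ (fun x => f x * g x)
      ≤ CB σ * sobolevNorm σ f * sobolevNorm σ g := by
  set A := sobolevNorm σ f with hA
  set B := sobolevNorm σ g with hB
  have key : ∀ i ≤ σ, L2 (iteratedDeriv i (fun x => f x * g x))
      ≤ 2^σ * Real.sqrt 3 * A * B := by
    intro i hi
    rw [iteratedDeriv_mul_eq hf hg i]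
    have hcont : ∀ j, Continuous (fun x =>
        (i.choose j : ℝ) * (iteratedDeriv j f x * iteratedDeriv (i-j) g x)) :=
      fun j => continuous_const.mul
        (((smooth_iter hf j).continuous).mul ((smooth_iter hg (i-j)).continuous))
    calc L2 (fun x => ∑ j ∈ range (i+1),
            (i.choose j : ℝ) * (iteratedDeriv j f x * iteratedDeriv (i-j) g x))
        ≤ ∑ j ∈ range (i+1), L2 (fun x =>
            (i.choose j : ℝ) * (iteratedDeriv j f x * iteratedDeriv (i-j) g x)) :=
          L2_sum_le (i+1) _ hcont
      _ ≤ ∑ j ∈ range (i+1), (i.choose j : ℝ) * (Real.sqrt 3 * A * B) := by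
          apply Finset.sum_le_sum
          intro j hj
          rw [L2_const_mul, abs_of_nonneg (Nat.cast_nonneg _)]
          apply mul_le_mul_of_nonneg_left _ (Nat.cast_nonneg _)
          apply L2_iter_mul' σ hσ hf hg
          have hj' := Finset.mem_range.mp hj
          omega
      _ = 2^i * (Real.sqrt 3 * A * B) := by
          rw [← Finset.sum_mul]
          congr 1
          rw [← Nat.cast_sum]
          rw [Nat.sum_range_choose]
          push_cast; ring
      _ ≤ 2^σ * Real.sqrt 3 * A * B := by
          have h2 : (2:ℝ)^i ≤ 2^σ := by
            apply pow_le_pow_right₀ (by norm_num) hi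
          have h3 : (0:ℝ) ≤ Real.sqrt 3 * A * B := by
            have := Real.sqrt_nonneg 3
            have := sobolev_nonneg σ f
            have := sobolev_nonneg σ g
            positivity
          nlinarith [h3, h2]
  calc sobolevNorm σ (fun x => f x * g x)
      ≤ ∑ i ∈ range (σ+1), L2 (iteratedDeriv i (fun x => f x * g x)) :=
        sobolev_le_sum σ _
    _ ≤ ∑ i ∈ range (σ+1), (2^σ * Real.sqrt 3 * A * B) := by
        apply Finset.sum_le_sum
        intro i hi
        exact key i (by have := Finset.mem_range.mp hi; omega)
    _ = ((σ:ℝ)+1) * (2^σ * Real.sqrt 3 * A * B) := by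
        rw [Finset.sum_const, Finset.card_range]
        push_cast; ring
    _ = CB σ * A * B := by rw [CB]; ring

lemma sobolev_iter_mul_le (σ : ℕ) (hσ : 1 ≤ σ) {u v : ℝ → ℝ}
    (hu : ContDiff ℝ ∞' u) (hv : ContDiff ℝ ∞' v) (m : ℕ) :
    sobolevNorm σ (iteratedDeriv m (fun x => u x * v x))
      ≤ ((σ:ℝ)+1) * CB σ * ∑ j ∈ range (m+1), (m.choose j : ℝ)
          * (sobolevNorm σ (iteratedDeriv j u) * sobolevNorm σ (iteratedDeriv (m-j) v)) := by
  rw [iteratedDeriv_mul_eq hu hv m]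
  set F : ℕ → ℝ → ℝ := fun j => fun x =>
    (m.choose j : ℝ) * (iteratedDeriv j u x * iteratedDeriv (m-j) v x) with hF
  have hFsmooth : ∀ j, ContDiff ℝ ∞' (F j) := by
    intro j
    exact contDiff_const.mul ((smooth_iter hu j).mul (smooth_iter hv (m-j)))
  have hstep : ∀ i, i ≤ σ → L2 (iteratedDeriv i (fun x => ∑ j ∈ range (m+1), F j x))
      ≤ ∑ j ∈ range (m+1), sobolevNorm σ (F j) := by
    intro i hi
    rw [iteratedDeriv_fun_sum hFsmooth]
    calc L2 (fun x => ∑ j ∈ range (m+1), iteratedDeriv i (F j) x)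
        ≤ ∑ j ∈ range (m+1), L2 (iteratedDeriv i (F j)) :=
          L2_sum_le _ _ (fun j => (smooth_iter (hFsmooth j) i).continuous)
      _ ≤ ∑ j ∈ range (m+1), sobolevNorm σ (F j) :=
          Finset.sum_le_sum (fun j _ => L2_iter_le σ hi (F j))
  have hFbound : ∀ j, sobolevNorm σ (F j) ≤ (m.choose j : ℝ) * (CB σ
      * (sobolevNorm σ (iteratedDeriv j u) * sobolevNorm σ (iteratedDeriv (m-j) v))) := by
    intro j
    rw [hF]
    rw [sobolev_const_mul σ _ ((smooth_iter hu j).mul (smooth_iter hv (m-j))),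
      abs_of_nonneg (Nat.cast_nonneg _)]
    apply mul_le_mul_of_nonneg_left _ (Nat.cast_nonneg _)
    calc sobolevNorm σ (fun x => iteratedDeriv j u x * iteratedDeriv (m-j) v x)
        ≤ CB σ * sobolevNorm σ (iteratedDeriv j u) * sobolevNorm σ (iteratedDeriv (m-j) v) :=
          sobolev_mul_le σ hσ (smooth_iter hu j) (smooth_iter hv (m-j))
      _ = CB σ * (sobolevNorm σ (iteratedDeriv j u) * sobolevNorm σ (iteratedDeriv (m-j) v)) := by
          ring
  calc sobolevNorm σ (fun x => ∑ j ∈ range (m+1), F j x)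
      ≤ ∑ i ∈ range (σ+1), L2 (iteratedDeriv i (fun x => ∑ j ∈ range (m+1), F j x)) :=
        sobolev_le_sum σ _
    _ ≤ ∑ i ∈ range (σ+1), ∑ j ∈ range (m+1), sobolevNorm σ (F j) :=
        Finset.sum_le_sum (fun i hi => hstep i (by
          have := Finset.mem_range.mp hi; omega))
    _ = ((σ:ℝ)+1) * ∑ j ∈ range (m+1), sobolevNorm σ (F j) := by
        rw [Finset.sum_const, Finset.card_range]
        push_cast; ring
    _ ≤ ((σ:ℝ)+1) * ∑ j ∈ range (m+1), (m.choose j : ℝ) * (CB σ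
          * (sobolevNorm σ (iteratedDeriv j u) * sobolevNorm σ (iteratedDeriv (m-j) v))) := by
        apply mul_le_mul_of_nonneg_left _ (by positivity)
        exact Finset.sum_le_sum (fun j _ => hFbound j)
    _ = ((σ:ℝ)+1) * CB σ * ∑ j ∈ range (m+1), (m.choose j : ℝ)
          * (sobolevNorm σ (iteratedDeriv j u) * sobolevNorm σ (iteratedDeriv (m-j) v)) := by
        rw [Finset.mul_sum, Finset.mul_sum]
        apply Finset.sum_congr rfl
        intro j _; ring
lemma sum_inv_sq (n : ℕ) : ∑ i ∈ range n, (1:ℝ)/((i:ℝ)+1)^2 ≤ 2 := by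
  have key : ∀ m : ℕ, ∑ i ∈ range (m+1), (1:ℝ)/((i:ℝ)+1)^2 ≤ 2 - 1/((m:ℝ)+1) := by
    intro m
    induction m with
    | zero => norm_num
    | succ m ih =>
        rw [Finset.sum_range_succ]
        have hx : (0:ℝ) < (m:ℝ)+1 := by positivity
        have hy : (0:ℝ) < (m:ℝ)+2 := by positivity
        have h1 : (1:ℝ)/(((m+1:ℕ):ℝ)+1)^2 ≤ 1/((m:ℝ)+1) - 1/((m:ℝ)+2) := by
          push_cast
          rw [div_sub_div _ _ (ne_of_gt hx) (ne_of_gt hy)]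
          rw [div_le_div_iff₀ (by positivity) (by positivity)]
          ring_nf
          nlinarith [hx, hy]
        have h2 : ((m+1:ℕ):ℝ)+1 = (m:ℝ)+2 := by push_cast; ring
        rw [h2] at h1 ⊢
        linarith
  cases n with
  | zero => simp
  | succ m =>
      have := key m
      have hpos : (0:ℝ) < 1/((m:ℝ)+1) := by positivity
      linarith

lemma weight_sum (k : ℕ) :
    ∑ j ∈ range (k+2), ((k:ℝ)+1)^2 / (((j:ℝ)+1)^2 * (((k+1-j : ℕ):ℝ)+1)^2) ≤ 8 := by
  have hterm : ∀ j ∈ range (k+2),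
      ((k:ℝ)+1)^2 / (((j:ℝ)+1)^2 * (((k+1-j : ℕ):ℝ)+1)^2)
        ≤ 2/((j:ℝ)+1)^2 + 2/((((k+1-j : ℕ):ℝ))+1)^2 := by
    intro j hj
    have hjk : j ≤ k+1 := by have := Finset.mem_range.mp hj; omega
    set x : ℝ := (j:ℝ)+1 with hxdef
    set y : ℝ := ((k+1-j : ℕ):ℝ)+1 with hydef
    have hx : (1:ℝ) ≤ x := by rw [hxdef]; have : (0:ℝ) ≤ (j:ℝ) := Nat.cast_nonneg j; linarith
    have hy : (1:ℝ) ≤ y := by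
      rw [hydef]; have : (0:ℝ) ≤ ((k+1-j:ℕ):ℝ) := Nat.cast_nonneg _; linarith
    have hxy : x + y = (k:ℝ) + 3 := by
      rw [hxdef, hydef]
      have : ((k+1-j:ℕ):ℝ) = ((k:ℝ)+1) - (j:ℝ) := by
        rw [Nat.cast_sub hjk]; push_cast; ring
      rw [this]; ring
    have hk1 : ((k:ℝ)+1)^2 ≤ 2*x^2 + 2*y^2 := by nlinarith [sq_nonneg (x-y)]
    have hrw : 2/x^2 + 2/y^2 = (2*x^2 + 2*y^2)/(x^2*y^2) := by
      field_simp; ring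
    rw [hrw]
    gcongr
  calc ∑ j ∈ range (k+2), ((k:ℝ)+1)^2 / (((j:ℝ)+1)^2 * (((k+1-j : ℕ):ℝ)+1)^2)
      ≤ ∑ j ∈ range (k+2), (2/((j:ℝ)+1)^2 + 2/((((k+1-j : ℕ):ℝ))+1)^2) :=
        Finset.sum_le_sum hterm
    _ = (∑ j ∈ range (k+2), 2/((j:ℝ)+1)^2)
        + ∑ j ∈ range (k+2), 2/((((k+1-j : ℕ):ℝ))+1)^2 := Finset.sum_add_distrib
    _ ≤ 8 := by
        have h1 : ∑ j ∈ range (k+2), 2/((j:ℝ)+1)^2 ≤ 4 := by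
          have := sum_inv_sq (k+2)
          have h2 : ∑ j ∈ range (k+2), 2/((j:ℝ)+1)^2
              = 2 * ∑ j ∈ range (k+2), (1:ℝ)/((j:ℝ)+1)^2 := by
            rw [Finset.mul_sum]; apply Finset.sum_congr rfl; intro j _; ring
          rw [h2]; linarith
        have h3 : ∑ j ∈ range (k+2), 2/((((k+1-j : ℕ):ℝ))+1)^2
            = ∑ j ∈ range (k+2), 2/(((j:ℝ))+1)^2 := by
          have := Finset.sum_range_reflect (fun i => 2/(((i:ℕ):ℝ)+1)^2) (k+2)
          simpa using this
        rw [h3]; linarith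

lemma geom_bound (k : ℕ) {s' s : ℝ} (h0 : 0 < s') (h1 : s' < s) :
    ((k:ℝ)+1) * s'^k * (s - s') ≤ s^(k+1) := by
  have hterm : ∀ i ∈ range (k+1), s'^k ≤ s^i * s'^(k-i) := by
    intro i hi
    have hik : i ≤ k := by have := Finset.mem_range.mp hi; omega
    calc s'^k = s'^i * s'^(k-i) := by rw [← pow_add]; congr 1; omega
      _ ≤ s^i * s'^(k-i) := by
          apply mul_le_mul_of_nonneg_right (pow_le_pow_left₀ h0.le h1.le i) (by positivity)
  have hsum : ((k:ℝ)+1) * s'^k ≤ ∑ i ∈ range (k+1), s^i * s'^((k+1)-1-i) := by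
    have hconst : ∑ _i ∈ range (k+1), s'^k = ((k:ℝ)+1) * s'^k := by
      rw [Finset.sum_const, Finset.card_range]; push_cast; ring
    rw [← hconst]
    apply Finset.sum_le_sum
    intro i hi
    simpa using hterm i hi
  have hfin : (∑ i ∈ range (k+1), s^i * s'^((k+1)-1-i)) * (s - s') = s^(k+1) - s'^(k+1) :=
    geom_sum₂_mul s s' (k+1)
  have hss : 0 ≤ s - s' := by linarith
  calc ((k:ℝ)+1) * s'^k * (s - s')
      ≤ (∑ i ∈ range (k+1), s^i * s'^((k+1)-1-i)) * (s - s') :=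
        mul_le_mul_of_nonneg_right hsum hss
    _ = s^(k+1) - s'^(k+1) := hfin
    _ ≤ s^(k+1) := by
        have hnn : 0 ≤ s'^(k+1) := by positivity
        linarith

lemma combin (k j : ℕ) (hj : j ≤ k+1) {s' s : ℝ} (hs' : 0 < s') (hs : 0 < s) :
    (((k+1).choose j : ℝ)) * s'^k * ((k:ℝ)+1)^2 / (Nat.factorial k : ℝ)
      = (s^j * ((j:ℝ)+1)^2 / (Nat.factorial j : ℝ))
        * (s^(k+1-j) * (((k+1-j:ℕ):ℝ)+1)^2 / (Nat.factorial (k+1-j) : ℝ))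
        * ((((k:ℝ)+1) * s'^k / s^(k+1))
            * (((k:ℝ)+1)^2 / (((j:ℝ)+1)^2 * ((((k+1-j:ℕ):ℝ))+1)^2))) := by
  have hch : (((k+1).choose j : ℝ)) * (Nat.factorial j : ℝ) * (Nat.factorial (k+1-j) : ℝ)
      = (((k:ℝ))+1) * (Nat.factorial k : ℝ) := by
    have h0 := Nat.choose_mul_factorial_mul_factorial hj
    have hcast : ((((k+1).choose j) * (Nat.factorial j) * (Nat.factorial (k+1-j)) : ℕ) : ℝ)
        = ((Nat.factorial (k+1) : ℕ) : ℝ) := by exact_mod_cast h0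
    push_cast at hcast
    rw [Nat.factorial_succ] at hcast
    push_cast at hcast
    linarith [hcast]
  have hpow : s^j * s^(k+1-j) = s^(k+1) := by rw [← pow_add]; congr 1; omega
  simp only [div_mul_div_comm]
  rw [div_eq_div_iff (by positivity) (by positivity)]
  linear_combination (s'^k * ((k:ℝ)+1)^2 * s^(k+1) * ((j:ℝ)+1)^2 * ((((k+1-j:ℕ):ℝ))+1)^2) * hch
    - (((k:ℝ)+1) * (Nat.factorial k : ℝ) * s'^k * ((k:ℝ)+1)^2 * ((j:ℝ)+1)^2
        * ((((k+1-j:ℕ):ℝ))+1)^2) * hpow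


end EsAuxPf

open Finset EsAuxPf

/-- Estimate for the first component `F₁(u₁,u₂) = −∂ₓ(u₁u₂)` (one space
dimension): `|||(uv)'|||_{s'} ≤ (c/(s−s')) |||u|||_s |||v|||_s`. -/
theorem esNorm_deriv_mul_le (σ : ℕ) (hσ : 2 ≤ σ) :
    ∃ c : ℝ, 0 < c ∧ ∀ s' s : ℝ, 0 < s' → s' < s → s < 1 →
      ∀ u v : ℝ → ℝ, ContDiff ℝ (⊤ : ℕ∞) u → ContDiff ℝ (⊤ : ℕ∞) v →
        Function.Periodic u 1 → Function.Periodic v 1 →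
        esNorm σ s' (deriv (fun x => u x * v x)) ≤
          ENNReal.ofReal (c / (s - s')) * esNorm σ s u * esNorm σ s v := by
  refine ⟨8 * (((σ:ℝ)+1) * CB σ), mul_pos (by norm_num) (mul_pos (by positivity) (CB_pos σ)), ?_⟩
  intro s' s hs'0 hs's hs1 u v huT hvT _hup _hvp
  have hu : ContDiff ℝ (((⊤:ℕ∞)) : WithTop ℕ∞) u := huT.of_le (by simp)
  have hv : ContDiff ℝ (((⊤:ℕ∞)) : WithTop ℕ∞) v := hvT.of_le (by simp)
  have hs0 : 0 < s := lt_trans hs'0 hs's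
  have hss : 0 < s - s' := by linarith
  set Ct : ℝ := ((σ:ℝ)+1) * CB σ with hCt
  have hCtpos : 0 < Ct := by
    have := CB_pos σ
    positivity
  set w : ℝ → ℝ := fun x => u x * v x with hw
  set A := esNorm σ s u with hA
  set B := esNorm σ s v with hB
  -- abbreviations
  set a : ℕ → ℝ := fun j => sobolevNorm σ (iteratedDeriv j u) with ha
  set b : ℕ → ℝ := fun j => sobolevNorm σ (iteratedDeriv j v) with hb
  have haP : ∀ j : ℕ, ENNReal.ofReal
      (a j * s ^ j * ((j : ℝ) + 1) ^ 2 / (Nat.factorial j : ℝ)) ≤ A := by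
    intro j
    rw [hA, esNorm]
    exact le_iSup (fun k => ENNReal.ofReal
      (sobolevNorm σ (iteratedDeriv k u) * s ^ k * ((k : ℝ) + 1) ^ 2 / (Nat.factorial k : ℝ))) j
  have hbP : ∀ j : ℕ, ENNReal.ofReal
      (b j * s ^ j * ((j : ℝ) + 1) ^ 2 / (Nat.factorial j : ℝ)) ≤ B := by
    intro j
    rw [hB, esNorm]
    exact le_iSup (fun k => ENNReal.ofReal
      (sobolevNorm σ (iteratedDeriv k v) * s ^ k * ((k : ℝ) + 1) ^ 2 / (Nat.factorial k : ℝ))) j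
  rw [esNorm]
  apply iSup_le
  intro k
  -- rewrite iterated derivative of deriv
  have hshift : iteratedDeriv k (deriv w) = iteratedDeriv (k+1) w := (iteratedDeriv_succ').symm
  rw [hshift]
  -- real-number estimate
  set ρ : ℕ → ℝ := fun j => Ct * (((k:ℝ)+1) * s'^k / s^(k+1))
      * (((k:ℝ)+1)^2 / (((j:ℝ)+1)^2 * ((((k+1-j:ℕ):ℝ))+1)^2)) with hρ
  have hρnn : ∀ j, 0 ≤ ρ j := by
    intro j
    rw [hρ]
    have h1 : (0:ℝ) ≤ ((k:ℝ)+1) * s'^k / s^(k+1) := by positivity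
    have h2 : (0:ℝ) ≤ ((k:ℝ)+1)^2 / (((j:ℝ)+1)^2 * ((((k+1-j:ℕ):ℝ))+1)^2) := by positivity
    positivity
  have hreal : sobolevNorm σ (iteratedDeriv (k+1) w) * s'^k * ((k:ℝ)+1)^2 / (Nat.factorial k : ℝ)
      ≤ ∑ j ∈ range (k+2),
          (a j * s ^ j * ((j : ℝ) + 1) ^ 2 / (Nat.factorial j : ℝ))
          * (b (k+1-j) * s ^ (k+1-j) * (((k+1-j:ℕ) : ℝ) + 1) ^ 2 / (Nat.factorial (k+1-j) : ℝ))
          * ρ j := by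
    have h1 : sobolevNorm σ (iteratedDeriv (k+1) w)
        ≤ Ct * ∑ j ∈ range (k+2), ((k+1).choose j : ℝ) * (a j * b (k+1-j)) :=
      sobolev_iter_mul_le σ (by omega) hu hv (k+1)
    have hwpos : 0 ≤ s'^k * ((k:ℝ)+1)^2 / (Nat.factorial k : ℝ) := by positivity
    calc sobolevNorm σ (iteratedDeriv (k+1) w) * s'^k * ((k:ℝ)+1)^2 / (Nat.factorial k : ℝ)
        = sobolevNorm σ (iteratedDeriv (k+1) w) * (s'^k * ((k:ℝ)+1)^2 / (Nat.factorial k : ℝ)) := by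
          ring
      _ ≤ (Ct * ∑ j ∈ range (k+2), ((k+1).choose j : ℝ) * (a j * b (k+1-j)))
            * (s'^k * ((k:ℝ)+1)^2 / (Nat.factorial k : ℝ)) :=
          mul_le_mul_of_nonneg_right h1 hwpos
      _ = ∑ j ∈ range (k+2), (a j * b (k+1-j))
            * (((k+1).choose j : ℝ) * s'^k * ((k:ℝ)+1)^2 / (Nat.factorial k : ℝ)) * Ct := by
          rw [Finset.mul_sum, Finset.sum_mul]
          apply Finset.sum_congr rfl
          intro j _
          ring
      _ = ∑ j ∈ range (k+2),
            (a j * s ^ j * ((j : ℝ) + 1) ^ 2 / (Nat.factorial j : ℝ))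
            * (b (k+1-j) * s ^ (k+1-j) * (((k+1-j:ℕ) : ℝ) + 1) ^ 2 / (Nat.factorial (k+1-j) : ℝ))
            * ρ j := by
          apply Finset.sum_congr rfl
          intro j hj
          have hjk : j ≤ k+1 := by have := Finset.mem_range.mp hj; omega
          rw [combin k j hjk hs'0 hs0, hρ]
          ring
  -- now pass to ENNReal
  calc ENNReal.ofReal
        (sobolevNorm σ (iteratedDeriv (k+1) w) * s'^k * ((k:ℝ)+1)^2 / (Nat.factorial k : ℝ))
      ≤ ENNReal.ofReal (∑ j ∈ range (k+2),
          (a j * s ^ j * ((j : ℝ) + 1) ^ 2 / (Nat.factorial j : ℝ))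
          * (b (k+1-j) * s ^ (k+1-j) * (((k+1-j:ℕ) : ℝ) + 1) ^ 2 / (Nat.factorial (k+1-j) : ℝ))
          * ρ j) := ENNReal.ofReal_le_ofReal hreal
    _ = ∑ j ∈ range (k+2), ENNReal.ofReal (
          (a j * s ^ j * ((j : ℝ) + 1) ^ 2 / (Nat.factorial j : ℝ))
          * (b (k+1-j) * s ^ (k+1-j) * (((k+1-j:ℕ) : ℝ) + 1) ^ 2 / (Nat.factorial (k+1-j) : ℝ))
          * ρ j) := by
        apply ENNReal.ofReal_sum_of_nonneg
        intro j _
        have h1 : 0 ≤ a j * s ^ j * ((j : ℝ) + 1) ^ 2 / (Nat.factorial j : ℝ) := by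
          have := sobolev_nonneg σ (iteratedDeriv j u)
          have h2 : 0 ≤ a j := this
          positivity
        have h3 : 0 ≤ b (k+1-j) * s ^ (k+1-j) * (((k+1-j:ℕ) : ℝ) + 1) ^ 2
            / (Nat.factorial (k+1-j) : ℝ) := by
          have h4 : 0 ≤ b (k+1-j) := sobolev_nonneg σ _
          positivity
        exact mul_nonneg (mul_nonneg h1 h3) (hρnn j)
    _ ≤ ∑ j ∈ range (k+2), A * B * ENNReal.ofReal (ρ j) := by
        apply Finset.sum_le_sum
        intro j _
        have h1 : 0 ≤ a j * s ^ j * ((j : ℝ) + 1) ^ 2 / (Nat.factorial j : ℝ) := by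
          have h2 : 0 ≤ a j := sobolev_nonneg σ _
          positivity
        have h3 : 0 ≤ b (k+1-j) * s ^ (k+1-j) * (((k+1-j:ℕ) : ℝ) + 1) ^ 2
            / (Nat.factorial (k+1-j) : ℝ) := by
          have h4 : 0 ≤ b (k+1-j) := sobolev_nonneg σ _
          positivity
        rw [ENNReal.ofReal_mul (mul_nonneg h1 h3), ENNReal.ofReal_mul h1]
        exact mul_le_mul' (mul_le_mul' (haP j) (hbP (k+1-j))) le_rfl
    _ = A * B * ∑ j ∈ range (k+2), ENNReal.ofReal (ρ j) := by
        rw [← Finset.mul_sum]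
    _ ≤ A * B * ENNReal.ofReal (8 * Ct / (s - s')) := by
        apply mul_le_mul_right
        rw [← ENNReal.ofReal_sum_of_nonneg (fun j _ => hρnn j)]
        apply ENNReal.ofReal_le_ofReal
        have hgeom : ((k:ℝ)+1) * s'^k / s^(k+1) ≤ 1 / (s - s') := by
          rw [div_le_div_iff₀ (by positivity) hss]
          calc ((k:ℝ)+1) * s'^k * (s - s') ≤ s^(k+1) := geom_bound k hs'0 hs's
            _ = 1 * s^(k+1) := by ring
        calc ∑ j ∈ range (k+2), ρ j
            = Ct * (((k:ℝ)+1) * s'^k / s^(k+1))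
              * ∑ j ∈ range (k+2), ((k:ℝ)+1)^2 / (((j:ℝ)+1)^2 * ((((k+1-j:ℕ):ℝ))+1)^2) := by
              rw [Finset.mul_sum]
          _ ≤ Ct * (1/(s-s')) * 8 := by
              have hsum8 := weight_sum k
              have hfac : (0:ℝ) ≤ Ct * (((k:ℝ)+1) * s'^k / s^(k+1)) := by
                have : (0:ℝ) ≤ ((k:ℝ)+1) * s'^k / s^(k+1) := by positivity
                positivity
              have hsumnn : (0:ℝ) ≤ ∑ j ∈ range (k+2),
                  ((k:ℝ)+1)^2 / (((j:ℝ)+1)^2 * ((((k+1-j:ℕ):ℝ))+1)^2) := by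
                apply Finset.sum_nonneg
                intro j _
                positivity
              have h8 : (0:ℝ) ≤ 8 := by norm_num
              have hmul1 : Ct * (((k:ℝ)+1) * s'^k / s^(k+1))
                  * ∑ j ∈ range (k+2), ((k:ℝ)+1)^2 / (((j:ℝ)+1)^2 * ((((k+1-j:ℕ):ℝ))+1)^2)
                  ≤ Ct * (((k:ℝ)+1) * s'^k / s^(k+1)) * 8 :=
                mul_le_mul_of_nonneg_left hsum8 hfac
              have hmul2 : Ct * (((k:ℝ)+1) * s'^k / s^(k+1)) * 8 ≤ Ct * (1/(s-s')) * 8 := by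
                apply mul_le_mul_of_nonneg_right _ h8
                exact mul_le_mul_of_nonneg_left hgeom hCtpos.le
              linarith
          _ = 8 * Ct / (s - s') := by ring
    _ = ENNReal.ofReal (8 * Ct / (s - s')) * A * B := by ring
end
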